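/- For any starting digit d, every digit appearing in any term of the look-and-say-again sequence with seed d belongs to the set {1, 2, 4, 6, d}. -/

import Mathlib

/-- Run-length encoding of a digit string (a list of digits). -/
def rle : List ℕ → List (ℕ × ℕ)
  | [] => []
  | a :: t =>
    match rle t with
    | [] => [(a, 1)]
    | (b, n) :: r => if a = b then (a, n + 1) :: r else (a, 1) :: (b, n) :: r

/-- `P` is a run-length representation of the digit string `S`:
multiplicities are positive, adjacent base digits are distinct, and `S` is
the concatenation of the runs. -/
def IsRLE (S : List ℕ) (P : List (ℕ × ℕ)) : Prop :=
  (∀ p ∈ P, 1 ≤ p.2) ∧ List.Chain' (fun p q => p.1 ≠ q.1) P ∧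
    S = (P.map fun p => List.replicate p.2 p.1).flatten

/-- The look-and-say-again step: each run `a^n` is read off as `n n a a`. -/
def lsa (T : List ℕ) : List ℕ := (rle T).flatMap fun p => [p.2, p.2, p.1, p.1]

/-- Property `P`: every run has base digit in `{1,2,4,6}` and length in `{2,4,6}`. -/
def propP (T : List ℕ) : Prop :=
  ∀ p ∈ rle T, p.1 ∈ ({1, 2, 4, 6} : Set ℕ) ∧ p.2 ∈ ({2, 4, 6} : Set ℕ)

/-!
The digits of `lsa T` are the run lengths and the digits of `T`, so it suffices that every run of
`lsa T` has length 2, 4 or 6 once `T` is itself a term of positive index. Now `lsa T` is the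
classical look-and-say image `n₁ a₁ n₂ a₂ …` of `T` with every digit doubled, so its runs are those
of the look-and-say image with doubled lengths. A look-and-say image has no run longer than 3: any
four consecutive positions contain two consecutive base digits `aᵢ ≠ aᵢ₊₁`.
-/

lemma rle_cons_of_rle_eq_nil {t : List ℕ} (h : rle t = []) (a : ℕ) : rle (a :: t) = [(a, 1)] := by
  simp [rle, h]

lemma rle_cons_of_rle_eq_cons {t : List ℕ} {a k : ℕ} {s : List (ℕ × ℕ)} (h : rle t = (a, k) :: s) :
    rle (a :: t) = (a, k + 1) :: s := by
  simp [rle, h]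

lemma rle_cons_of_rle_eq_cons_of_ne {t : List ℕ} {b k : ℕ} {s : List (ℕ × ℕ)}
    (h : rle t = (b, k) :: s) {a : ℕ} (hab : a ≠ b) : rle (a :: t) = (a, 1) :: (b, k) :: s := by
  simp [rle, h, hab]

theorem isRLE_rle (S : List ℕ) : IsRLE S (rle S) := by
  induction S with
  | nil => exact ⟨by simp [rle], List.isChain_nil, rfl⟩
  | cons a t ih =>
    obtain ⟨hpos, hchain, hflat⟩ := ih
    rcases ht : rle t with _ | ⟨⟨b, k⟩, s⟩
    · obtain rfl : t = [] := by simpa [ht] using hflat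
      exact ⟨by simp [rle], List.isChain_singleton _, rfl⟩
    · rw [ht] at hpos hchain hflat
      simp only [List.forall_mem_cons] at hpos
      by_cases hab : a = b
      · subst hab
        rw [rle_cons_of_rle_eq_cons ht]
        exact ⟨by simpa using hpos.2, List.isChain_cons.mpr (List.isChain_cons.mp hchain),
          by simp [hflat, List.replicate_succ]⟩
      · rw [rle_cons_of_rle_eq_cons_of_ne ht hab]
        exact ⟨by simpa using hpos, List.isChain_cons_cons.mpr ⟨hab, hchain⟩, by simp [hflat]⟩

lemma one_le_of_mem_rle {S : List ℕ} {p : ℕ × ℕ} (hp : p ∈ rle S) : 1 ≤ p.2 :=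
  (isRLE_rle S).1 p hp

lemma isChain_rle (S : List ℕ) : List.IsChain (fun p q : ℕ × ℕ => p.1 ≠ q.1) (rle S) :=
  (isRLE_rle S).2.1

lemma fst_mem_of_mem_rle {S : List ℕ} {p : ℕ × ℕ} (hp : p ∈ rle S) : p.1 ∈ S := by
  obtain ⟨hpos, -, hS⟩ := isRLE_rle S
  rw [hS, List.mem_flatten]
  exact ⟨_, List.mem_map_of_mem hp, List.mem_replicate.mpr ⟨by have := hpos p hp; omega, rfl⟩⟩

lemma rle_flatMap_pair (L : List ℕ) :
    rle (L.flatMap fun x => [x, x]) = (rle L).map fun p => (p.1, 2 * p.2) := by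
  induction L with
  | nil => rfl
  | cons a t ih =>
    rw [List.flatMap_cons, List.cons_append, List.cons_append, List.nil_append]
    rcases ht : rle t with _ | ⟨⟨b, k⟩, s⟩
    · rw [ht, List.map_nil] at ih
      simp [rle_cons_of_rle_eq_cons (rle_cons_of_rle_eq_nil ih a), rle_cons_of_rle_eq_nil ht]
    · rw [ht, List.map_cons] at ih
      by_cases hab : a = b
      · subst hab
        simp [rle_cons_of_rle_eq_cons (rle_cons_of_rle_eq_cons ih), rle_cons_of_rle_eq_cons ht,
          mul_add]
      · simp [rle_cons_of_rle_eq_cons (rle_cons_of_rle_eq_cons_of_ne ih hab),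
          rle_cons_of_rle_eq_cons_of_ne ht hab]

def lookAndSay (S : List ℕ) : List ℕ := (rle S).flatMap fun p => [p.2, p.1]

lemma lsa_eq_flatMap_lookAndSay (T : List ℕ) : lsa T = (lookAndSay T).flatMap fun x => [x, x] := by
  simp [lsa, lookAndSay, List.flatMap_assoc]

lemma exists_rle_flatMap_count_digit {a n : ℕ} {L : List (ℕ × ℕ)}
    (hL : List.IsChain (fun p q : ℕ × ℕ => p.1 ≠ q.1) ((a, n) :: L)) :
    ∃ m r, rle (((a, n) :: L).flatMap fun p => [p.2, p.1]) = (n, m) :: r ∧ (2 ≤ m → n = a) ∧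
      ∀ q ∈ (n, m) :: r, q.2 ≤ 3 := by
  induction L generalizing a n with
  | nil =>
    by_cases hna : n = a
    · subst hna
      exact ⟨2, [], by simp [rle], fun _ => rfl, by simp⟩
    · exact ⟨1, [(a, 1)], by simp [rle, hna], by omega, by simp⟩
  | cons p L ih =>
    obtain ⟨a₂, n₂⟩ := p
    obtain ⟨haa₂, htail⟩ := List.isChain_cons_cons.mp hL
    obtain ⟨m₂, r₂, hrle, hm₂, hr₂⟩ := ih htail
    set R := ((a₂, n₂) :: L).flatMap fun p => [p.2, p.1]
    -- `a` can only merge with a run of `n₂` of length 1: a longer one would force `n₂ = a₂ ≠ a`.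
    obtain ⟨k, s, hk_rle, hk, hs⟩ :
        ∃ k s, rle (a :: R) = (a, k) :: s ∧ k ≤ 2 ∧ ∀ q ∈ s, q.2 ≤ 3 := by
      by_cases han₂ : a = n₂
      · subst han₂
        have hm₂_lt : m₂ < 2 := by
          by_contra h
          exact haa₂ (hm₂ (by omega))
        exact ⟨m₂ + 1, r₂, rle_cons_of_rle_eq_cons hrle, by omega,
          fun q hq => hr₂ q (by simp [hq])⟩
      · exact ⟨1, (n₂, m₂) :: r₂, rle_cons_of_rle_eq_cons_of_ne hrle han₂, by omega, hr₂⟩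
    have hflat : ((a, n) :: (a₂, n₂) :: L).flatMap (fun p => [p.2, p.1]) = n :: a :: R := rfl
    rw [hflat]
    by_cases hna : n = a
    · subst hna
      exact ⟨k + 1, s, rle_cons_of_rle_eq_cons hk_rle, fun _ => rfl,
        by simpa [show k < 3 by omega] using hs⟩
    · refine ⟨1, (a, k) :: s, rle_cons_of_rle_eq_cons_of_ne hk_rle hna, by omega, ?_⟩
      simpa [show k ≤ 3 by omega] using hs

lemma count_le_three_of_mem_rle_lookAndSay {S : List ℕ} {q : ℕ × ℕ} (hq : q ∈ rle (lookAndSay S)) :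
    q.2 ≤ 3 := by
  unfold lookAndSay at hq
  rcases hS : rle S with _ | ⟨⟨a, n⟩, L⟩
  · simp [hS, rle] at hq
  · obtain ⟨m, r, hrle, -, hle⟩ := exists_rle_flatMap_count_digit (hS ▸ isChain_rle S)
    rw [hS, hrle] at hq
    exact hle q hq

lemma count_mem_of_mem_rle_lsa {T : List ℕ} {q : ℕ × ℕ} (hq : q ∈ rle (lsa T)) :
    q.2 ∈ ({2, 4, 6} : Set ℕ) := by
  rw [lsa_eq_flatMap_lookAndSay, rle_flatMap_pair, List.mem_map] at hq
  obtain ⟨p, hp, rfl⟩ := hq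
  have h1 := one_le_of_mem_rle hp
  have h3 := count_le_three_of_mem_rle_lookAndSay hp
  interval_cases p.2 <;> simp

lemma mem_lsa {T : List ℕ} {x : ℕ} : x ∈ lsa T ↔ ∃ p ∈ rle T, x = p.2 ∨ x = p.1 := by
  simp [lsa]

theorem lsa_seq_digits_general (d : ℕ) :
    ∀ n : ℕ, ∀ x ∈ lsa^[n] [d], x ∈ ({1, 2, 4, 6, d} : Set ℕ) := by
  have hcount : ∀ n, ∀ q ∈ rle (lsa^[n] [d]), q.2 ∈ ({1, 2, 4, 6} : Set ℕ) := by
    rintro (_ | n) q hq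
    · simp_all [rle]
    · rw [Function.iterate_succ_apply'] at hq
      have := count_mem_of_mem_rle_lsa hq
      simp only [Set.mem_insert_iff, Set.mem_singleton_iff] at this ⊢
      omega
  intro n
  induction n with
  | zero => simp
  | succ n ih =>
    intro x hx
    rw [Function.iterate_succ_apply', mem_lsa] at hx
    obtain ⟨p, hp, rfl | rfl⟩ := hx
    · have := hcount n p hp
      simp only [Set.mem_insert_iff, Set.mem_singleton_iff] at this ⊢
      omega
    · exact ih _ (fst_mem_of_mem_rle hp)

/-- Every digit of every term of the look-and-say-again sequence with seed `d`
belongs to `{1, 2, 4, 6, d}`. -/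
theorem lsa_seq_digits (d : ℕ) (hd : d ≤ 9) :
    ∀ n : ℕ, ∀ x ∈ lsa^[n] [d], x ∈ ({1, 2, 4, 6, d} : Set ℕ) :=
  lsa_seq_digits_general d
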